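/- Let Ω be an open subset of ℝⁿ, p ∈ [1,∞], and w : (0,∞) → [0,∞) such that w(r) ≠ 0 for all r in some interval (0,r₀) and lim sup_{r→0} w(r) r^{n/p} = +∞. Then the generalized Morrey space M_p^w(Ω) = {0}, i.e. every f ∈ M_p^w(Ω) vanishes almost everywhere in Ω. -/

import Mathlib

open MeasureTheory Metric Set Filter ENNReal

/-- The (generalized) Morrey quantity `|f|_{ρ,w,p,Ω}`:
`sup_{(x,r) ∈ Ω × (0,ρ)} w(r) ‖f‖_{L^p(B(x,r) ∩ Ω)}`, valued in `ℝ≥0∞`. -/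
noncomputable def morreyNorm {n : ℕ} (Ω : Set (EuclideanSpace ℝ (Fin n)))
    (p : ℝ≥0∞) (w : ℝ → ℝ) (ρ : ℝ≥0∞) (f : EuclideanSpace ℝ (Fin n) → ℝ) : ℝ≥0∞ :=
  ⨆ x ∈ Ω, ⨆ r ∈ {r : ℝ | 0 < r ∧ ENNReal.ofReal r < ρ},
    ENNReal.ofReal (w r) * eLpNorm f p (volume.restrict (ball x r ∩ Ω))

/-!
By Hölder's inequality and the Morrey bound, for every ball `B(y, r) ⊆ Ω` the quantity
`w(r) r^{n/p}` times the mean of `|f|` over `B(y, r)` is at most `‖f‖_{M_p^w} / |B(0,1)|^{1/p}`.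
At a Lebesgue point `y ∈ Ω` of `|f|` these means tend to `|f(y)|`, so `|f(y)| > 0` would force
`limsup_{r→0} w(r) r^{n/p} < ∞`. The Lebesgue differentiation theorem applies because the
Morrey bound at a single radius where `w > 0` makes `f` integrable on the balls of that radius.
-/

open scoped Topology
open Module (finrank)

theorem ENNReal.eq_zero_of_tendsto_of_limsup_eq_top {α : Type*} {l : Filter α}
    {u a : α → ℝ≥0∞} {L K : ℝ≥0∞} (hu : Tendsto u l (𝓝 L)) (ha : limsup a l = ⊤) (hK : K ≠ ⊤)
    (hbound : ∀ᶠ x in l, a x * u x ≤ K) : L = 0 := by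
  by_contra hL
  obtain ⟨b, hb0, hbL⟩ := exists_between (pos_iff_ne_zero.2 hL)
  have hub : ∀ᶠ x in l, b ≤ u x := (hu.eventually (eventually_gt_nhds hbL)).mono fun _ h => h.le
  have hab : limsup (fun x => a x * b) l ≤ K :=
    limsup_le_of_le (by isBoundedDefault)
      ((hbound.and hub).mono fun x ⟨h, h'⟩ => (by gcongr : a x * b ≤ a x * u x).trans h)
  rw [ENNReal.limsup_mul_const_of_ne_top hbL.ne_top, ha, ENNReal.mul_top hb0.ne'] at hab
  exact hK (top_le_iff.1 hab)

theorem frequently_pos_of_limsup_ofReal_eq_top {α : Type*} {l : Filter α} {v : α → ℝ}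
    (h : limsup (fun x => ENNReal.ofReal (v x)) l = ⊤) : ∃ᶠ x in l, 0 < v x := by
  by_contra hv
  rw [not_frequently] at hv
  have : limsup (fun x => ENNReal.ofReal (v x)) l ≤ 0 :=
    limsup_le_of_le (by isBoundedDefault)
      (hv.mono fun x hx => (ENNReal.ofReal_eq_zero.2 (not_lt.1 hx)).le)
  simp [h] at this

theorem ae_imp_of_forall_mem_nhdsWithin {α : Type*} [TopologicalSpace α]
    [SecondCountableTopology α] [MeasurableSpace α] {μ : Measure α} {s : Set α} {P : α → Prop}
    (h : ∀ x ∈ s, ∃ u ∈ 𝓝[s] x, ∀ᵐ y ∂μ, y ∈ u → P y) : ∀ᵐ y ∂μ, y ∈ s → P y := by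
  simp only [ae_iff, Classical.not_imp] at h ⊢
  refine measure_null_of_locally_null _ fun x hx => ?_
  obtain ⟨u, hu, hnull⟩ := h x hx.1
  exact ⟨{y | y ∈ s ∧ ¬P y} ∩ u,
    inter_mem self_mem_nhdsWithin (nhdsWithin_mono _ (fun _ hy => hy.1) hu),
    measure_mono_null (fun y hy => ⟨hy.2, hy.1.2⟩ :
      {y | y ∈ s ∧ ¬P y} ∩ u ⊆ {y | y ∈ u ∧ ¬P y}) hnull⟩

theorem ae_tendsto_setLAverage_closedBall {E : Type*} [MetricSpace E] [SecondCountableTopology E]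
    [MeasurableSpace E] [BorelSpace E] [HasBesicovitchCovering E] (μ : Measure E)
    [IsLocallyFiniteMeasure μ] {g : E → ℝ≥0∞} (hg : Measurable g) (hgi : ∫⁻ x, g x ∂μ ≠ ⊤) :
    ∀ᵐ x ∂μ, Tendsto (fun r => ⨍⁻ y in closedBall x r, g y ∂μ) (𝓝[>] 0) (𝓝 (g x)) := by
  filter_upwards [(Besicovitch.vitaliFamily μ).ae_tendsto_lintegral_div' hg hgi] with x hx
  simpa only [setLAverage_eq, Function.comp_def] using hx.comp (Besicovitch.tendsto_filterAt μ x)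

theorem lintegral_enorm_le_eLpNorm_mul_measure_rpow {α F : Type*} [MeasurableSpace α]
    [NormedAddCommGroup F] {μ : Measure α} {f : α → F} {p : ℝ≥0∞} (hp : 1 ≤ p)
    (hf : AEStronglyMeasurable f μ) (s : Set α) :
    ∫⁻ x in s, ‖f x‖ₑ ∂μ ≤ eLpNorm f p (μ.restrict s) * μ s ^ (1 - p.toReal⁻¹) := by
  simpa [eLpNorm_one_eq_lintegral_enorm, Measure.restrict_apply_univ] using
    eLpNorm_le_eLpNorm_mul_rpow_measure_univ hp hf.restrict

theorem ENNReal.toReal_inv_le_one {p : ℝ≥0∞} (hp : 1 ≤ p) : p.toReal⁻¹ ≤ 1 := by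
  rw [← ENNReal.toReal_inv]
  exact ENNReal.toReal_le_of_le_ofReal zero_le_one (by simpa using ENNReal.inv_le_one.2 hp)

section AddHaar

variable {E : Type*} [NormedAddCommGroup E] [NormedSpace ℝ E] [MeasurableSpace E] [BorelSpace E]
  [FiniteDimensional ℝ E] (μ : Measure E) [μ.IsAddHaarMeasure]

theorem addHaar_closedBall_ae_eq_ball (x : E) {r : ℝ} (hr : r ≠ 0) :
    closedBall x r =ᵐ[μ] ball x r := by
  rw [← closedBall_sdiff_sphere]
  exact (sdiff_null_ae_eq_self (Measure.addHaar_sphere_of_ne_zero μ x hr)).symm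

theorem addHaar_ball_rpow (x : E) {r : ℝ} (hr : 0 < r) {t : ℝ} (ht : 0 ≤ t) :
    μ (ball x r) ^ t = ENNReal.ofReal (r ^ (finrank ℝ E * t)) * μ (ball 0 1) ^ t := by
  rw [Measure.addHaar_ball_of_pos μ x hr, ENNReal.mul_rpow_of_nonneg _ _ ht,
    ENNReal.ofReal_rpow_of_pos (by positivity), ← Real.rpow_natCast, ← Real.rpow_mul hr.le]

end AddHaar

section Morrey

variable {n : ℕ} {Ω : Set (EuclideanSpace ℝ (Fin n))} {p : ℝ≥0∞} {w : ℝ → ℝ}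
  {f : EuclideanSpace ℝ (Fin n) → ℝ} {x : EuclideanSpace ℝ (Fin n)} {r : ℝ}

theorem le_morreyNorm (hx : x ∈ Ω) (hr : 0 < r) :
    ENNReal.ofReal (w r) * eLpNorm f p (volume.restrict (ball x r ∩ Ω)) ≤
      morreyNorm Ω p w ⊤ f :=
  le_iSup₂_of_le x hx <| le_iSup₂_of_le (f := fun r _ =>
    ENNReal.ofReal (w r) * eLpNorm f p (volume.restrict (ball x r ∩ Ω))) r
      ⟨hr, ofReal_lt_top⟩ le_rfl

theorem ofReal_mul_lintegral_le_morreyNorm_mul (hp : 1 ≤ p) (hf : Measurable f) (hx : x ∈ Ω)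
    (hr : 0 < r) :
    ENNReal.ofReal (w r) * ∫⁻ y in ball x r ∩ Ω, ‖f y‖ₑ ≤
      morreyNorm Ω p w ⊤ f * volume (ball x r) ^ (1 - p.toReal⁻¹) := by
  have he : 0 ≤ 1 - p.toReal⁻¹ := sub_nonneg.2 (ENNReal.toReal_inv_le_one hp)
  calc ENNReal.ofReal (w r) * ∫⁻ y in ball x r ∩ Ω, ‖f y‖ₑ
      ≤ ENNReal.ofReal (w r) * (eLpNorm f p (volume.restrict (ball x r ∩ Ω)) *
          volume (ball x r ∩ Ω) ^ (1 - p.toReal⁻¹)) := by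
        gcongr
        exact lintegral_enorm_le_eLpNorm_mul_measure_rpow hp hf.aestronglyMeasurable _
    _ = ENNReal.ofReal (w r) * eLpNorm f p (volume.restrict (ball x r ∩ Ω)) *
          volume (ball x r ∩ Ω) ^ (1 - p.toReal⁻¹) := (mul_assoc _ _ _).symm
    _ ≤ morreyNorm Ω p w ⊤ f * volume (ball x r) ^ (1 - p.toReal⁻¹) := by
        gcongr
        · exact le_morreyNorm hx hr
        · exact inter_subset_left

theorem lintegral_ball_inter_lt_top (hp : 1 ≤ p) (hf : Measurable f)
    (hC : morreyNorm Ω p w ⊤ f < ⊤) (hx : x ∈ Ω) (hr : 0 < r) (hw : 0 < w r) :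
    ∫⁻ y in ball x r ∩ Ω, ‖f y‖ₑ < ⊤ := by
  have he : 0 ≤ 1 - p.toReal⁻¹ := sub_nonneg.2 (ENNReal.toReal_inv_le_one hp)
  refine ENNReal.lt_top_of_mul_ne_top_right (ne_top_of_le_ne_top ?_
    (ofReal_mul_lintegral_le_morreyNorm_mul hp hf hx hr)) (ENNReal.ofReal_pos.2 hw).ne'
  exact ENNReal.mul_ne_top hC.ne (ENNReal.rpow_ne_top_of_nonneg he measure_ball_lt_top.ne)

theorem ofReal_mul_rpow_mul_setLAverage_le (hp : 1 ≤ p) (hf : Measurable f)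
    (hball : ball x r ⊆ Ω) (hr : 0 < r) :
    ENNReal.ofReal (w r * r ^ (n / p.toReal)) * (⨍⁻ y in ball x r, ‖f y‖ₑ ∂volume) ≤
      morreyNorm Ω p w ⊤ f / volume (ball (0 : EuclideanSpace ℝ (Fin n)) 1) ^ p.toReal⁻¹ := by
  set B := volume (ball x r)
  have hB0 : B ≠ 0 := (measure_ball_pos _ _ hr).ne'
  have hBtop : B ≠ ⊤ := measure_ball_lt_top.ne
  have hscale : ENNReal.ofReal (r ^ (n / p.toReal)) *
      volume (ball (0 : EuclideanSpace ℝ (Fin n)) 1) ^ p.toReal⁻¹ = B ^ p.toReal⁻¹ := by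
    rw [addHaar_ball_rpow volume x hr (by positivity), finrank_euclideanSpace_fin, div_eq_mul_inv]
  have hmorrey :=
    ofReal_mul_lintegral_le_morreyNorm_mul (w := w) hp hf (hball (mem_ball_self hr)) hr
  rw [inter_eq_left.2 hball] at hmorrey
  rw [ENNReal.le_div_iff_mul_le
    (Or.inl (ENNReal.rpow_pos (measure_ball_pos _ _ one_pos) measure_ball_lt_top.ne).ne')
    (Or.inl (ENNReal.rpow_ne_top_of_nonneg (by positivity) measure_ball_lt_top.ne))]
  calc ENNReal.ofReal (w r * r ^ (n / p.toReal)) * (⨍⁻ y in ball x r, ‖f y‖ₑ ∂volume) *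
        volume (ball (0 : EuclideanSpace ℝ (Fin n)) 1) ^ p.toReal⁻¹
      = ENNReal.ofReal (w r) * (∫⁻ y in ball x r, ‖f y‖ₑ) * B ^ p.toReal⁻¹ / B := by
        rw [setLAverage_eq, ENNReal.ofReal_mul' (by positivity), ← hscale]
        simp only [div_eq_mul_inv]
        ring
    _ ≤ morreyNorm Ω p w ⊤ f * B ^ (1 - p.toReal⁻¹) * B ^ p.toReal⁻¹ / B := by gcongr
    _ = morreyNorm Ω p w ⊤ f := by
        rw [mul_assoc, ← ENNReal.rpow_add _ _ hB0 hBtop, sub_add_cancel, ENNReal.rpow_one,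
          mul_div_assoc, ENNReal.div_self hB0 hBtop, mul_one]

theorem ae_eq_zero_of_mem_ball_inter (hΩ : IsOpen Ω) (hp : 1 ≤ p) (hf : Measurable f)
    (hC : morreyNorm Ω p w ⊤ f < ⊤)
    (hlimsup : limsup (fun r : ℝ => ENNReal.ofReal (w r * r ^ ((n : ℝ) / p.toReal)))
      (𝓝[>] 0) = ⊤)
    (hx : x ∈ Ω) (hr : 0 < r) (hw : 0 < w r) :
    ∀ᵐ y, y ∈ ball x r ∩ Ω → f y = 0 := by
  set S := ball x r ∩ Ω
  have hS : IsOpen S := isOpen_ball.inter hΩ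
  set g := S.indicator fun y => ‖f y‖ₑ
  have hgi : ∫⁻ y, g y ≠ ⊤ := by
    rw [lintegral_indicator hS.measurableSet]
    exact (lintegral_ball_inter_lt_top hp hf hC hx hr hw).ne
  have hK :
      morreyNorm Ω p w ⊤ f / volume (ball (0 : EuclideanSpace ℝ (Fin n)) 1) ^ p.toReal⁻¹ ≠ ⊤ :=
    ENNReal.div_ne_top hC.ne (ENNReal.rpow_pos (measure_ball_pos _ _ one_pos)
      measure_ball_lt_top.ne).ne'
  filter_upwards [ae_tendsto_setLAverage_closedBall volume
    (hf.enorm.indicator hS.measurableSet) hgi] with y hy hyS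
  have hbound : ∀ᶠ t in 𝓝[>] 0, ENNReal.ofReal (w t * t ^ ((n : ℝ) / p.toReal)) *
      ⨍⁻ z in closedBall y t, g z ∂volume ≤
        morreyNorm Ω p w ⊤ f / volume (ball (0 : EuclideanSpace ℝ (Fin n)) 1) ^ p.toReal⁻¹ := by
    obtain ⟨ε, hε, hεS⟩ := isOpen_iff.1 hS y hyS
    filter_upwards [Ioo_mem_nhdsGT hε] with t ⟨ht, htε⟩
    have hsub : closedBall y t ⊆ S := (closedBall_subset_ball htε).trans hεS
    rw [setLAverage_congr_fun measurableSet_closedBall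
        (fun z hz => indicator_of_mem (hsub hz) _),
      setLAverage_congr (addHaar_closedBall_ae_eq_ball volume y ht.ne')]
    exact ofReal_mul_rpow_mul_setLAverage_le hp hf
      ((ball_subset_closedBall.trans hsub).trans inter_subset_right) ht
  have hgy := ENNReal.eq_zero_of_tendsto_of_limsup_eq_top hy hlimsup hK hbound
  simpa [g, indicator_of_mem hyS] using hgy

end Morrey

theorem stmt4_general (n : ℕ) (Ω : Set (EuclideanSpace ℝ (Fin n))) (hΩ : IsOpen Ω)
    (p : ℝ≥0∞) (hp : 1 ≤ p) (w : ℝ → ℝ)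
    (hlimsup : Filter.limsup
      (fun r : ℝ => ENNReal.ofReal (w r * r ^ ((n : ℝ) / p.toReal)))
      (nhdsWithin 0 (Set.Ioi 0)) = ⊤) :
    ∀ f : EuclideanSpace ℝ (Fin n) → ℝ, Measurable f →
      morreyNorm Ω p w ⊤ f < ⊤ → f =ᵐ[volume.restrict Ω] 0 := by
  intro f hf hC
  obtain ⟨δ, hwδ, hδ : 0 < δ⟩ :=
    ((frequently_pos_of_limsup_ofReal_eq_top hlimsup).and_eventually self_mem_nhdsWithin).exists
  rw [EventuallyEq, ae_restrict_iff' hΩ.measurableSet]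
  exact ae_imp_of_forall_mem_nhdsWithin fun x hx =>
    ⟨ball x δ ∩ Ω,
      inter_mem (mem_nhdsWithin_of_mem_nhds (ball_mem_nhds x hδ)) self_mem_nhdsWithin,
      ae_eq_zero_of_mem_ball_inter hΩ hp hf hC hlimsup hx hδ
        (pos_of_mul_pos_left hwδ (by positivity))⟩

/-- If `w ≠ 0` near `0` and `limsup_{r→0} w(r) r^{n/p} = ∞`, then `M_p^w(Ω)` is trivial. -/
theorem stmt4 (n : ℕ) (Ω : Set (EuclideanSpace ℝ (Fin n))) (hΩ : IsOpen Ω)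
    (p : ℝ≥0∞) (hp : 1 ≤ p) (w : ℝ → ℝ) (hw : ∀ r > (0:ℝ), 0 ≤ w r)
    (hw0 : ∃ r₀ > (0:ℝ), ∀ r ∈ Set.Ioo (0:ℝ) r₀, w r ≠ 0)
    (hlimsup : Filter.limsup
      (fun r : ℝ => ENNReal.ofReal (w r * r ^ ((n : ℝ) / p.toReal)))
      (nhdsWithin 0 (Set.Ioi 0)) = ⊤) :
    ∀ f : EuclideanSpace ℝ (Fin n) → ℝ, Measurable f →
      morreyNorm Ω p w ⊤ f < ⊤ → f =ᵐ[volume.restrict Ω] 0 :=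
  stmt4_general n Ω hΩ p hp w hlimsup
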